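/- arXiv:2212.05955 — 2 statements merged into one kernel-verified Lean document; each statement's English description precedes it below -/
import Mathlib

section
/- For every positive integer t and every θ in the support Θ of the target distribution Π, the t-step accept-reject-based Markov kernel satisfies the total variation lower bound ‖P^t(θ,·) − Π‖_TV ≥ (1 − A(θ))^t, where A(θ) is the acceptance probability at θ. -/
/-!
Each step of the chain started at `θ` rejects, and so stays at `θ`, with probability at least
`1 − A(θ)`; hence `P^t(θ, {θ}) ≥ (1 − A(θ))^t`. On the other hand `Π {θ} = 0`, because `Π ≪ λ`
and `λ {θ} = 0`. Testing the total variation distance against the indicator of `{θ}` gives the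
bound.
-/

open MeasureTheory

variable {Ω : Type*} [MeasurableSpace Ω]

/-- The acceptance probability `A(θ) = ∫ a(θ,θ') q(θ,θ') dλ(θ')`. -/
noncomputable def acceptProb (lam : Measure Ω) (a q : Ω → Ω → ℝ) (θ : Ω) : ℝ :=
  ∫ θ', a θ θ' * q θ θ' ∂lam

/-- The accept-reject-based Markov kernel
`P(θ,B) = ∫_B a(θ,θ') q(θ,θ') dλ(θ') + δ_θ(B) (1 − A(θ))`. -/
noncomputable def arbKernel (lam : Measure Ω) (a q : Ω → Ω → ℝ) (θ : Ω) : Measure Ω :=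
  lam.withDensity (fun θ' => ENNReal.ofReal (a θ θ' * q θ θ')) +
    (ENNReal.ofReal (1 - acceptProb lam a q θ)) • Measure.dirac θ

/-- The `t`-step iterate `P^t(θ,·)` of a Markov kernel, with `P^0(θ,·) = δ_θ`. -/
noncomputable def iterK (P : Ω → Measure Ω) : ℕ → Ω → Measure Ω
  | 0 => fun θ => Measure.dirac θ
  | (t + 1) => fun θ => (iterK P t θ).bind P

/-- Total variation distance:
`‖μ − ν‖_TV = sup { ∫ f dμ − ∫ f dν : f measurable, 0 ≤ f ≤ 1 }`. -/
noncomputable def tvDist (μ ν : Measure Ω) : ℝ :=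
  ⨆ f : {f : Ω → ℝ // Measurable f ∧ ∀ x, f x ∈ Set.Icc (0:ℝ) 1},
    (∫ x, f.1 x ∂μ - ∫ x, f.1 x ∂ν)

open ENNReal

section TotalVariation

variable {μ ν : Measure Ω}

theorem integral_sub_integral_le_tvDist [IsFiniteMeasure μ] {f : Ω → ℝ} (hf : Measurable f)
    (hf01 : ∀ x, f x ∈ Set.Icc (0 : ℝ) 1) : ∫ x, f x ∂μ - ∫ x, f x ∂ν ≤ tvDist μ ν := by
  refine le_ciSup (f := fun g : {g : Ω → ℝ // Measurable g ∧ ∀ x, g x ∈ Set.Icc (0 : ℝ) 1} =>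
    ∫ x, g.1 x ∂μ - ∫ x, g.1 x ∂ν) ⟨μ.real Set.univ, ?_⟩ ⟨f, hf, hf01⟩
  rintro _ ⟨⟨g, hgm, hg01⟩, rfl⟩
  have hμ : ∫ x, g x ∂μ ≤ ∫ _, (1 : ℝ) ∂μ :=
    integral_mono_of_nonneg (.of_forall fun x => (hg01 x).1) (integrable_const 1)
      (.of_forall fun x => (hg01 x).2)
  have hν : 0 ≤ ∫ x, g x ∂ν := integral_nonneg fun x => (hg01 x).1
  simp only [integral_const, smul_eq_mul, mul_one] at hμ
  linarith

theorem measureReal_sub_le_tvDist [IsFiniteMeasure μ] {s : Set Ω} (hs : MeasurableSet s) :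
    μ.real s - ν.real s ≤ tvDist μ ν := by
  have h := integral_sub_integral_le_tvDist (μ := μ) (ν := ν)
    (measurable_const.indicator hs : Measurable (s.indicator fun _ => (1 : ℝ)))
    fun x => by by_cases hx : x ∈ s <;> simp [hx]
  simpa [integral_indicator_const _ hs] using h

end TotalVariation

section Iterates

variable {P : Ω → Measure Ω}

theorem isProbabilityMeasure_iterK (hP : Measurable P) (hP1 : ∀ x, IsProbabilityMeasure (P x))
    (n : ℕ) (θ : Ω) : IsProbabilityMeasure (iterK P n θ) := by
  induction n with
  | zero => exact Measure.dirac.isProbabilityMeasure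
  | succ n ih => exact isProbabilityMeasure_bind hP.aemeasurable (.of_forall hP1)

theorem pow_le_iterK_apply_singleton (hP : Measurable P) {θ : Ω} (hθ : MeasurableSet {θ})
    (n : ℕ) : P θ {θ} ^ n ≤ iterK P n θ {θ} := by
  induction n with
  | zero => simp [iterK]
  | succ n ih =>
    have hmeas : Measurable fun x => P x {θ} := Measure.measurable_coe hθ |>.comp hP
    calc P θ {θ} ^ (n + 1) ≤ P θ {θ} * iterK P n θ {θ} := by
          rw [pow_succ']; gcongr
      _ = ∫⁻ x in {θ}, P x {θ} ∂iterK P n θ := (lintegral_singleton' hmeas θ).symm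
      _ ≤ ∫⁻ x, P x {θ} ∂iterK P n θ := setLIntegral_le_lintegral _ _
      _ = iterK P (n + 1) θ {θ} := (Measure.bind_apply hθ hP.aemeasurable).symm

end Iterates

section ARBKernel

variable {lam : Measure Ω} {a q : Ω → Ω → ℝ}

theorem integrable_accept_mul_proposal (ham : Measurable (Function.uncurry a))
    (ha01 : ∀ θ θ', a θ θ' ∈ Set.Icc (0:ℝ) 1) (hq1 : ∀ θ, ∫ θ', q θ θ' ∂lam = 1) (θ : Ω) :
    Integrable (fun θ' => a θ θ' * q θ θ') lam :=
  (Integrable.of_integral_ne_zero (by simp [hq1])).bdd_mul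
    (ham.comp measurable_prodMk_left).aestronglyMeasurable
    (.of_forall fun θ' => by simpa [abs_of_nonneg (ha01 θ θ').1] using (ha01 θ θ').2)

theorem acceptProb_le_one (ha01 : ∀ θ θ', a θ θ' ∈ Set.Icc (0:ℝ) 1) (hq0 : ∀ θ θ', 0 ≤ q θ θ')
    (hq1 : ∀ θ, ∫ θ', q θ θ' ∂lam = 1) (θ : Ω) : acceptProb lam a q θ ≤ 1 := by
  rw [acceptProb, ← hq1 θ]
  refine integral_mono_of_nonneg (.of_forall fun θ' => mul_nonneg (ha01 θ θ').1 (hq0 θ θ'))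
    (Integrable.of_integral_ne_zero (by simp [hq1])) (.of_forall fun θ' => ?_)
  exact mul_le_of_le_one_left (hq0 θ θ') (ha01 θ θ').2

theorem measurable_arbKernel [SFinite lam] (ham : Measurable (Function.uncurry a))
    (hqm : Measurable (Function.uncurry q)) : Measurable (arbKernel lam a q) := by
  refine Measure.measurable_of_measurable_coe _ fun s hs => ?_
  simp only [arbKernel, Measure.add_apply, Measure.smul_apply, smul_eq_mul,
    withDensity_apply _ hs]
  have hA : Measurable (acceptProb lam a q) :=
    (ham.mul hqm).stronglyMeasurable.integral_prod_right'.measurable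
  exact ((ham.mul hqm).ennreal_ofReal.lintegral_prod_right' (ν := lam.restrict s)).add
    ((measurable_const.sub hA).ennreal_ofReal.mul
      ((Measure.measurable_coe hs).comp Measure.measurable_dirac))

theorem isProbabilityMeasure_arbKernel (ham : Measurable (Function.uncurry a))
    (ha01 : ∀ θ θ', a θ θ' ∈ Set.Icc (0:ℝ) 1) (hq0 : ∀ θ θ', 0 ≤ q θ θ')
    (hq1 : ∀ θ, ∫ θ', q θ θ' ∂lam = 1) (θ : Ω) : IsProbabilityMeasure (arbKernel lam a q θ) := by
  have hA0 : 0 ≤ acceptProb lam a q θ :=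
    integral_nonneg fun θ' => mul_nonneg (ha01 θ θ').1 (hq0 θ θ')
  have hA1 := acceptProb_le_one ha01 hq0 hq1 θ
  constructor
  rw [arbKernel, Measure.add_apply, Measure.smul_apply, smul_eq_mul, withDensity_apply _ .univ, Measure.restrict_univ,
    Measure.dirac_apply_of_mem (Set.mem_univ θ), mul_one,
    ← ofReal_integral_eq_lintegral_ofReal (integrable_accept_mul_proposal ham ha01 hq1 θ)
      (.of_forall fun θ' => mul_nonneg (ha01 θ θ').1 (hq0 θ θ')), ← acceptProb,
    ← ENNReal.ofReal_add hA0 (sub_nonneg.2 hA1), add_sub_cancel, ENNReal.ofReal_one]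

theorem ofReal_one_sub_acceptProb_le_arbKernel_self (θ : Ω) :
    ENNReal.ofReal (1 - acceptProb lam a q θ) ≤ arbKernel lam a q θ {θ} := by
  simp [arbKernel]

end ARBKernel

theorem arb_tv_lower_bound_general
    (lam : Measure Ω) [SigmaFinite lam]
    (Pi : Measure Ω)
    (Θ : Set Ω)
    (pi : Ω → ℝ)
    (hdens : Pi = lam.withDensity (fun x => ENNReal.ofReal (pi x)))
    (hsing : ∀ θ ∈ Θ, MeasurableSet {θ} ∧ lam {θ} = 0)
    (a q : Ω → Ω → ℝ)
    (ham : Measurable (Function.uncurry a)) (hqm : Measurable (Function.uncurry q))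
    (ha01 : ∀ θ θ', a θ θ' ∈ Set.Icc (0:ℝ) 1)
    (hq0 : ∀ θ θ', 0 ≤ q θ θ') (hq1 : ∀ θ, ∫ θ', q θ θ' ∂lam = 1)
    (t : ℕ) (θ : Ω) (hθ : θ ∈ Θ) :
    (1 - acceptProb lam a q θ) ^ t ≤ tvDist (iterK (arbKernel lam a q) t θ) Pi := by
  obtain ⟨hθm, hθ0⟩ := hsing θ hθ
  have hP := measurable_arbKernel (lam := lam) ham hqm
  have := isProbabilityMeasure_iterK hP (isProbabilityMeasure_arbKernel ham ha01 hq0 hq1) t θ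
  have hPi : Pi {θ} = 0 := hdens ▸ withDensity_absolutelyContinuous _ _ hθ0
  have hrej : 0 ≤ 1 - acceptProb lam a q θ := sub_nonneg.2 (acceptProb_le_one ha01 hq0 hq1 θ)
  calc (1 - acceptProb lam a q θ) ^ t = (ENNReal.ofReal (1 - acceptProb lam a q θ) ^ t).toReal := by
        rw [toReal_pow, toReal_ofReal hrej]
    _ ≤ (iterK (arbKernel lam a q) t θ).real {θ} :=
        toReal_mono (measure_ne_top _ _) <|
          (pow_le_pow_left₀ (zero_le) (ofReal_one_sub_acceptProb_le_arbKernel_self θ) t).trans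
            (pow_le_iterK_apply_singleton hP hθm t)
    _ = (iterK (arbKernel lam a q) t θ).real {θ} - Pi.real {θ} := by
        rw [measureReal_def (μ := Pi), hPi, toReal_zero, sub_zero]
    _ ≤ tvDist _ _ := measureReal_sub_le_tvDist hθm

/-- Theorem 1: for every `t ∈ ℤ₊` and every `θ ∈ Θ`,
`‖P^t(θ,·) − Π‖_TV ≥ (1 − A(θ))^t`. -/
theorem arb_tv_lower_bound
    (lam : Measure Ω) [SigmaFinite lam]
    (Pi : Measure Ω) [IsProbabilityMeasure Pi]
    (Θ : Set Ω) (hΘne : Θ.Nonempty) (hΘmeas : MeasurableSet Θ)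
    (pi : Ω → ℝ) (hpim : Measurable pi)
    (hdens : Pi = lam.withDensity (fun x => ENNReal.ofReal (pi x)))
    (hpos : ∀ θ ∈ Θ, 0 < pi θ) (hzero : ∀ θ ∉ Θ, pi θ = 0)
    (hsing : ∀ θ ∈ Θ, MeasurableSet {θ} ∧ lam {θ} = 0)
    (a q : Ω → Ω → ℝ)
    (ham : Measurable (Function.uncurry a)) (hqm : Measurable (Function.uncurry q))
    (ha01 : ∀ θ θ', a θ θ' ∈ Set.Icc (0:ℝ) 1)
    (hq0 : ∀ θ θ', 0 ≤ q θ θ') (hq1 : ∀ θ, ∫ θ', q θ θ' ∂lam = 1)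
    (hinv : Pi.bind (arbKernel lam a q) = Pi)
    (t : ℕ) (ht : 1 ≤ t) (θ : Ω) (hθ : θ ∈ Θ) :
    (1 - acceptProb lam a q θ) ^ t ≤ tvDist (iterK (arbKernel lam a q) t θ) Pi :=
  arb_tv_lower_bound_general lam Pi Θ pi hdens hsing a q ham hqm ha01 hq0 hq1 t θ hθ
end

section
/- Let π be a target density on ℝ^d with respect to Lebesgue measure, h ∈ (0,∞), C a symmetric positive-definite d×d matrix, and μ : ℝ^d → ℝ^d arbitrary. For the Metropolis-Hastings chain with proposal distribution N(μ(θ), hC), the acceptance probability at any θ₀ with π(θ₀) > 0 satisfies A(θ₀) ≤ 1 / ( π(θ₀) (2πh)^{d/2} det(C)^{1/2} ). -/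
open MeasureTheory Matrix

/-- The Metropolis-Hastings acceptance function
`a_MH(θ,θ') = min(π(θ')q(θ',θ)/(π(θ)q(θ,θ')), 1)`, equal to `1` when `π(θ)q(θ,θ') = 0`. -/
noncomputable def mhAcceptFn {α : Type*} (pi : α → ℝ) (q : α → α → ℝ) (θ θ' : α) : ℝ :=
  if 0 < pi θ * q θ θ' then min ((pi θ' * q θ' θ) / (pi θ * q θ θ')) 1 else 1

/-- The Metropolis-Hastings acceptance probability `A(θ) = ∫ a_MH(θ,θ') q(θ,θ') dλ(θ')`. -/
noncomputable def mhAcceptProb {α : Type*} [MeasurableSpace α] (lam : Measure α)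
    (pi : α → ℝ) (q : α → α → ℝ) (θ : α) : ℝ :=
  ∫ θ', mhAcceptFn pi q θ θ' * q θ θ' ∂lam

/-- The Gaussian proposal density `q(θ,x)` of `N(μ(θ), hC)`:
`(2πh)^{−d/2} det(C)^{−1/2} exp(−(x−μ(θ))ᵀ(hC)⁻¹(x−μ(θ))/2)`. -/
noncomputable def gaussProposal {d : ℕ} (h : ℝ) (C : Matrix (Fin d) (Fin d) ℝ)
    (μ : (Fin d → ℝ) → (Fin d → ℝ)) (θ x : Fin d → ℝ) : ℝ :=
  (2 * Real.pi * h) ^ (-(d : ℝ) / 2) * C.det ^ (-(1 : ℝ) / 2) *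
    Real.exp (-(1 / (2 * h)) * ((x - μ θ) ⬝ᵥ (C⁻¹ *ᵥ (x - μ θ))))

/-!
The accepted part `a_MH(θ₀,θ') q(θ₀,θ')` of the proposal is at most `π(θ') q(θ',θ₀) / π(θ₀)`,
the reverse move weighted by the target. A Gaussian density never exceeds its peak value
`(2πh)^{-d/2} det(C)^{-1/2}`, so integrating against the probability density `π` gives the bound.
-/

section MetropolisHastings

variable {α : Type*} {pi : α → ℝ} {q : α → α → ℝ}

lemma mhAcceptFn_nonneg {θ θ' : α} (hpi : 0 ≤ pi θ') (hq : 0 ≤ q θ' θ) :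
    0 ≤ mhAcceptFn pi q θ θ' := by
  unfold mhAcceptFn
  split_ifs with hpos
  · exact le_min (div_nonneg (mul_nonneg hpi hq) hpos.le) zero_le_one
  · exact zero_le_one

lemma mhAcceptFn_mul_le {θ θ' : α} (hθ : 0 < pi θ) (hq : 0 < q θ θ') :
    mhAcceptFn pi q θ θ' * q θ θ' ≤ pi θ' * q θ' θ / pi θ := by
  rw [mhAcceptFn, if_pos (mul_pos hθ hq)]
  calc min (pi θ' * q θ' θ / (pi θ * q θ θ')) 1 * q θ θ'
      ≤ pi θ' * q θ' θ / (pi θ * q θ θ') * q θ θ' := by gcongr; exact min_le_left _ _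
    _ = pi θ' * q θ' θ / pi θ := by field_simp

lemma mhAcceptProb_le [MeasurableSpace α] {lam : Measure α} {θ : α} {K : ℝ}
    (hpi : ∀ x, 0 ≤ pi x) (hpi_int : Integrable pi lam) (hθ : 0 < pi θ)
    (hq : ∀ x y, 0 < q x y) (hqK : ∀ x, q x θ ≤ K) :
    mhAcceptProb lam pi q θ ≤ K / pi θ * ∫ x, pi x ∂lam := by
  rw [mhAcceptProb, ← integral_const_mul]
  refine integral_mono_of_nonneg (.of_forall fun x ↦ ?_) (hpi_int.const_mul _)
    (.of_forall fun x ↦ ?_)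
  · exact mul_nonneg (mhAcceptFn_nonneg (hpi x) (hq x θ).le) (hq θ x).le
  · calc mhAcceptFn pi q θ x * q θ x ≤ pi x * q x θ / pi θ := mhAcceptFn_mul_le hθ (hq θ x)
      _ ≤ pi x * K / pi θ := by gcongr; exacts [hpi x, hqK x]
      _ = K / pi θ * pi x := by ring

end MetropolisHastings

section GaussianProposal

variable {d : ℕ} {h : ℝ} {C : Matrix (Fin d) (Fin d) ℝ}

lemma gaussProposal_pos (hh : 0 < h) (hC : C.PosDef) (μ : (Fin d → ℝ) → (Fin d → ℝ))
    (θ x : Fin d → ℝ) : 0 < gaussProposal h C μ θ x := by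
  have := hC.det_pos
  unfold gaussProposal
  positivity

lemma gaussProposal_le (hh : 0 ≤ h) (hC : C.PosDef) (μ : (Fin d → ℝ) → (Fin d → ℝ))
    (θ x : Fin d → ℝ) :
    gaussProposal h C μ θ x ≤ ((2 * Real.pi * h) ^ ((d : ℝ) / 2) * C.det ^ ((1 : ℝ) / 2))⁻¹ := by
  have hQ : 0 ≤ (x - μ θ) ⬝ᵥ (C⁻¹ *ᵥ (x - μ θ)) := by
    simpa using hC.inv.posSemidef.dotProduct_mulVec_nonneg (x - μ θ)
  have hexp : Real.exp (-(1 / (2 * h)) * ((x - μ θ) ⬝ᵥ (C⁻¹ *ᵥ (x - μ θ)))) ≤ 1 := by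
    rw [Real.exp_le_one_iff, neg_mul, neg_nonpos]
    positivity
  have hdet := hC.det_pos
  unfold gaussProposal
  rw [neg_div, neg_div, Real.rpow_neg (by positivity), Real.rpow_neg hdet.le, ← mul_inv]
  exact mul_le_of_le_one_right (by positivity) hexp

end GaussianProposal

theorem mh_gaussian_proposal_accept_bound_general
    {d : ℕ} (h : ℝ) (hh : 0 < h)
    (C : Matrix (Fin d) (Fin d) ℝ) (hC : C.PosDef)
    (μ : (Fin d → ℝ) → (Fin d → ℝ))
    (pi : (Fin d → ℝ) → ℝ) (hpi0 : ∀ θ, 0 ≤ pi θ)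
    (hpi1 : ∫ θ, pi θ = 1)
    (θ₀ : Fin d → ℝ) (hθ₀ : 0 < pi θ₀) :
    mhAcceptProb volume pi (gaussProposal h C μ) θ₀ ≤
      1 / (pi θ₀ * (2 * Real.pi * h) ^ ((d : ℝ) / 2) * C.det ^ ((1 : ℝ) / 2)) := by
  have hpi_int : Integrable pi := .of_integral_ne_zero (by rw [hpi1]; exact one_ne_zero)
  calc mhAcceptProb volume pi (gaussProposal h C μ) θ₀
      ≤ ((2 * Real.pi * h) ^ ((d : ℝ) / 2) * C.det ^ ((1 : ℝ) / 2))⁻¹ / pi θ₀ * ∫ θ, pi θ :=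
        mhAcceptProb_le hpi0 hpi_int hθ₀ (gaussProposal_pos hh hC μ)
          (fun θ ↦ gaussProposal_le hh.le hC μ θ θ₀)
    _ = _ := by rw [hpi1]; ring

/-- Proposition 5: for Metropolis-Hastings with proposal `N(μ(θ), hC)`, at any `θ₀` with
`π(θ₀) > 0`, `A(θ₀) ≤ 1/(π(θ₀)(2πh)^{d/2} det(C)^{1/2})`. -/
theorem mh_gaussian_proposal_accept_bound
    {d : ℕ} (hd : 0 < d) (h : ℝ) (hh : 0 < h)
    (C : Matrix (Fin d) (Fin d) ℝ) (hC : C.PosDef)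
    (μ : (Fin d → ℝ) → (Fin d → ℝ))
    (pi : (Fin d → ℝ) → ℝ) (hpim : Measurable pi) (hpi0 : ∀ θ, 0 ≤ pi θ)
    (hpi1 : ∫ θ, pi θ = 1)
    (θ₀ : Fin d → ℝ) (hθ₀ : 0 < pi θ₀) :
    mhAcceptProb volume pi (gaussProposal h C μ) θ₀ ≤
      1 / (pi θ₀ * (2 * Real.pi * h) ^ ((d : ℝ) / 2) * C.det ^ ((1 : ℝ) / 2)) :=
  mh_gaussian_proposal_accept_bound_general h hh C hC μ pi hpi0 hpi1 θ₀ hθ₀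
end
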